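/- arXiv:2104.09870 — 2 statements merged into one kernel-verified Lean document; each statement's English description precedes it below -/
import Mathlib

section
/- Let n ≥ 1, c > 0 and ε > 0. Define 𝒟̃_n(1+t) := (1+t)^{2 − n/2} if n ≤ 3, (ln(e+t))^{1/2} if n = 4, and (1+t)^{1 − n/4} if n ≥ 5. Then there is a constant C > 0 such that for all t ≥ 0, ‖ |ξ|^{−2} |sin(|ξ|t/2)|² e^{−c|ξ|²t} ‖_{L²(|ξ|<ε)} ≤ C 𝒟̃_n(1+t). -/
open MeasureTheory

/-- The time-dependent function `𝒟̃_n(1+t)`: `(1+t)^{2 - n/2}` if `n ≤ 3`,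
`(ln(e+t))^{1/2}` if `n = 4`, `(1+t)^{1 - n/4}` if `n ≥ 5`. -/
noncomputable def calDTilde (n : ℕ) (t : ℝ) : ℝ :=
  if n ≤ 3 then (1 + t) ^ ((2 : ℝ) - (n : ℝ) / 2)
  else if n = 4 then (Real.log (Real.exp 1 + t)) ^ ((1 : ℝ) / 2)
  else (1 + t) ^ ((1 : ℝ) - (n : ℝ) / 4)

open Real Set

/-!
Write `r = ‖ξ‖` and `τ = 1 + t`. Since `|sin x| ≤ min 1 |x|`, and since for `r < ε`
`e^{-2 c r² t} ≤ e^{c ε²} e^{-c τ r²}`, the squared integrand is at most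
`e^{c ε²} min (r⁻⁴) τ⁴ e^{-c τ r²}`. In polar coordinates its integral over `ℝⁿ` becomes a
multiple of `∫₀^∞ y^{n-1} min (y⁻⁴) τ⁴ e^{-c τ y²} dy`. Splitting at `y = τ⁻¹`, the part near `0`
contributes `τ^{4-n}/n` and the rest is at most `∫_{τ⁻¹}^∞ y^{n-5} e^{-c τ y²} dy`. For `n ≤ 3`
the Gaussian factor can be dropped, giving `τ^{4-n}`; for `n = 4` one gets `log τ` plus a
constant; for `n ≥ 5` it is bounded by a Gamma integral of size `τ^{(4-n)/2}`.
-/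

theorem setIntegral_Ioi_le_intervalIntegral_add_setIntegral_Ioi {f g h : ℝ → ℝ} {a b : ℝ}
    (hab : a ≤ b) (hf : IntegrableOn f (Ioi a)) (hg : IntervalIntegrable g volume a b)
    (hh : IntegrableOn h (Ioi b)) (hfg : ∀ x ∈ Icc a b, f x ≤ g x)
    (hfh : ∀ x ∈ Ioi b, f x ≤ h x) :
    ∫ x in Ioi a, f x ≤ (∫ x in a..b, g x) + ∫ x in Ioi b, h x := by
  have hf' : IntegrableOn f (Ioi b) := hf.mono_set (Ioi_subset_Ioi hab)
  rw [← intervalIntegral.integral_interval_add_Ioi hf hf']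
  exact add_le_add
    (intervalIntegral.integral_mono_on hab
      ((intervalIntegrable_iff_integrableOn_Ioc_of_le hab).2 (hf.mono_set Ioc_subset_Ioi_self))
      hg hfg)
    (setIntegral_mono_on hf' hh measurableSet_Ioi hfh)

theorem integrableOn_Ioi_rpow_mul_exp_neg_mul_sq {a b : ℝ} (ha : 0 < a) (hb : 0 < b) (p : ℝ) :
    IntegrableOn (fun x : ℝ => x ^ p * exp (-b * x ^ 2)) (Ioi a) := by
  set q := max p 0
  have hq : -1 < q := by linarith [le_max_right p 0]
  refine (((integrableOn_rpow_mul_exp_neg_mul_sq hb hq).mono_set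
    (Ioi_subset_Ioi ha.le)).const_mul (a ^ (p - q))).mono' ?_ ?_
  · exact (ContinuousOn.mul (continuousOn_id.rpow_const fun x hx => Or.inl (ha.trans hx).ne')
      (by fun_prop)).aestronglyMeasurable measurableSet_Ioi
  · refine (ae_restrict_iff' measurableSet_Ioi).2 (.of_forall fun x (hx : a < x) => ?_)
    have hx0 : 0 < x := ha.trans hx
    have hpq : x ^ p ≤ a ^ (p - q) * x ^ q := by
      calc x ^ p = x ^ (p - q) * x ^ q := by rw [← rpow_add hx0, sub_add_cancel]
        _ ≤ a ^ (p - q) * x ^ q := mul_le_mul_of_nonneg_right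
          (rpow_le_rpow_of_nonpos ha hx.le (sub_nonpos.2 (le_max_left p 0))) (by positivity)
    rw [norm_of_nonneg (by positivity), ← mul_assoc]
    gcongr

theorem setIntegral_Ioi_rpow_mul_exp_neg_mul_sq_le {a b q : ℝ} (ha : 0 ≤ a) (hb : 0 < b)
    (hq : -1 < q) :
    ∫ x in Ioi a, x ^ q * exp (-b * x ^ 2)
      ≤ b ^ (-(q + 1) / 2) * (1 / 2) * Gamma ((q + 1) / 2) := by
  calc ∫ x in Ioi a, x ^ q * exp (-b * x ^ 2) ≤ ∫ x in Ioi 0, x ^ q * exp (-b * x ^ 2) :=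
        setIntegral_mono_set (integrableOn_rpow_mul_exp_neg_mul_sq hb hq)
          ((ae_restrict_iff' measurableSet_Ioi).2 (.of_forall fun x (hx : 0 < x) => by positivity))
          (Ioi_subset_Ioi ha).eventuallyLE
    _ = _ := by
      simp_rw [← rpow_two]
      exact integral_rpow_mul_exp_neg_mul_rpow two_pos hq hb

noncomputable def radialProfile (c τ y : ℝ) : ℝ :=
  min ((y ^ 4)⁻¹) (τ ^ 4) * exp (-(c * τ) * y ^ 2)

section RadialProfile

variable {n : ℕ} {c τ : ℝ}

theorem radialProfile_nonneg (y : ℝ) : 0 ≤ radialProfile c τ y := by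
  unfold radialProfile
  have : 0 ≤ min ((y ^ 4)⁻¹) (τ ^ 4) := le_min (by positivity) (by positivity)
  positivity

theorem radialProfile_le_pow_four (hcτ : 0 ≤ c * τ) (y : ℝ) : radialProfile c τ y ≤ τ ^ 4 := by
  have hexp : exp (-(c * τ) * y ^ 2) ≤ 1 := exp_le_one_iff.2 (by nlinarith [sq_nonneg y])
  calc radialProfile c τ y ≤ τ ^ 4 * 1 :=
        mul_le_mul (min_le_right _ _) hexp (exp_pos _).le (by positivity)
    _ = τ ^ 4 := mul_one _

theorem pow_mul_radialProfile_le (hn : 1 ≤ n) {y : ℝ} (hy : 0 < y) :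
    y ^ (n - 1) * radialProfile c τ y ≤ y ^ ((n : ℝ) - 5) * exp (-(c * τ) * y ^ 2) := by
  have hpow : y ^ (n - 1) * (y ^ 4)⁻¹ = y ^ ((n : ℝ) - 5) := by
    rw [← rpow_natCast, ← rpow_natCast, ← rpow_neg hy.le, ← rpow_add hy, Nat.cast_sub hn]
    congr 1
    push_cast
    ring
  calc y ^ (n - 1) * radialProfile c τ y
      ≤ y ^ (n - 1) * ((y ^ 4)⁻¹ * exp (-(c * τ) * y ^ 2)) := by
        unfold radialProfile; gcongr; exact min_le_left _ _
    _ = y ^ ((n : ℝ) - 5) * exp (-(c * τ) * y ^ 2) := by rw [← mul_assoc, hpow]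

theorem integrableOn_pow_mul_radialProfile (n : ℕ) (hc : 0 < c) (hτ : 0 < τ) :
    IntegrableOn (fun y => y ^ (n - 1) * radialProfile c τ y) (Ioi 0) := by
  have hmaj := (integrableOn_rpow_mul_exp_neg_mul_sq (mul_pos hc hτ)
    (s := ((n - 1 : ℕ) : ℝ)) (neg_one_lt_zero.trans_le (Nat.cast_nonneg _))).const_mul (τ ^ 4)
  refine hmaj.mono' (by unfold radialProfile; fun_prop) ?_
  refine (ae_restrict_iff' measurableSet_Ioi).2 (.of_forall fun y (hy : 0 < y) => ?_)
  rw [norm_of_nonneg (mul_nonneg (by positivity) (radialProfile_nonneg y)), rpow_natCast]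
  calc y ^ (n - 1) * radialProfile c τ y
      ≤ y ^ (n - 1) * (τ ^ 4 * exp (-(c * τ) * y ^ 2)) := by
        unfold radialProfile; gcongr; exact min_le_right _ _
    _ = τ ^ 4 * (y ^ (n - 1) * exp (-(c * τ) * y ^ 2)) := by ring

theorem integral_pow_mul_radialProfile_le (hn : 1 ≤ n) (hc : 0 < c) (hτ : 0 < τ) :
    ∫ y in Ioi 0, y ^ (n - 1) * radialProfile c τ y
      ≤ τ ^ ((4 : ℝ) - n) / n + ∫ y in Ioi τ⁻¹, y ^ ((n : ℝ) - 5) * exp (-(c * τ) * y ^ 2) := by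
  have hnear : ∫ y in (0)..τ⁻¹, τ ^ 4 * y ^ (n - 1) = τ ^ ((4 : ℝ) - n) / n := by
    rw [intervalIntegral.integral_const_mul, integral_pow, Nat.sub_add_cancel hn,
      Nat.cast_sub hn, Nat.cast_one, sub_add_cancel, zero_pow (by omega), sub_zero, inv_pow,
      rpow_sub hτ, rpow_natCast, rpow_ofNat]
    ring
  rw [← hnear]
  refine setIntegral_Ioi_le_intervalIntegral_add_setIntegral_Ioi (inv_pos.2 hτ).le
    (integrableOn_pow_mul_radialProfile n hc hτ) (by apply Continuous.intervalIntegrable; fun_prop)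
    (integrableOn_Ioi_rpow_mul_exp_neg_mul_sq (inv_pos.2 hτ) (mul_pos hc hτ) _)
    (fun y hy => ?_) (fun y hy => pow_mul_radialProfile_le hn ((inv_pos.2 hτ).trans hy))
  rw [mul_comm]
  exact mul_le_mul_of_nonneg_right (radialProfile_le_pow_four (by positivity) y) (pow_nonneg hy.1 _)

theorem integral_pow_mul_radialProfile_le_of_le_three (hn : 1 ≤ n) (hn3 : n ≤ 3) (hc : 0 < c)
    (hτ : 0 < τ) :
    ∫ y in Ioi 0, y ^ (n - 1) * radialProfile c τ y ≤ 2 * τ ^ ((4 : ℝ) - n) := by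
  have hn' : (1 : ℝ) ≤ n := by exact_mod_cast hn
  have hn3' : (n : ℝ) ≤ 3 := by exact_mod_cast hn3
  have htail : ∫ y in Ioi τ⁻¹, y ^ ((n : ℝ) - 5) * exp (-(c * τ) * y ^ 2)
      ≤ τ ^ ((4 : ℝ) - n) / (4 - n) :=
    calc ∫ y in Ioi τ⁻¹, y ^ ((n : ℝ) - 5) * exp (-(c * τ) * y ^ 2)
        ≤ ∫ y in Ioi τ⁻¹, y ^ ((n : ℝ) - 5) :=
          setIntegral_mono_on
            (integrableOn_Ioi_rpow_mul_exp_neg_mul_sq (inv_pos.2 hτ) (mul_pos hc hτ) _)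
            (integrableOn_Ioi_rpow_of_lt (by linarith) (inv_pos.2 hτ)) measurableSet_Ioi
            fun y hy => mul_le_of_le_one_right (rpow_nonneg ((inv_pos.2 hτ).trans hy).le _)
              (exp_le_one_iff.2 (by nlinarith [mul_pos hc hτ, sq_nonneg y]))
      _ = τ ^ ((4 : ℝ) - n) / (4 - n) := by
          rw [integral_Ioi_rpow_of_lt (by linarith) (inv_pos.2 hτ), inv_rpow hτ.le,
            ← rpow_neg hτ.le, show (n : ℝ) - 5 + 1 = -(4 - n) by ring, neg_neg, neg_div_neg_eq]
  calc ∫ y in Ioi 0, y ^ (n - 1) * radialProfile c τ y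
      ≤ τ ^ ((4 : ℝ) - n) / n + τ ^ ((4 : ℝ) - n) / (4 - n) :=
        (integral_pow_mul_radialProfile_le hn hc hτ).trans (add_le_add le_rfl htail)
    _ ≤ τ ^ ((4 : ℝ) - n) + τ ^ ((4 : ℝ) - n) := by
        gcongr <;> exact div_le_self (by positivity) (by linarith)
    _ = 2 * τ ^ ((4 : ℝ) - n) := by ring

theorem integral_pow_mul_radialProfile_four_le (hc : 0 < c) (hτ : 1 ≤ τ) :
    ∫ y in Ioi 0, y ^ (4 - 1) * radialProfile c τ y ≤ 1 + log τ + (2 * c)⁻¹ := by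
  have hτ0 : 0 < τ := one_pos.trans_le hτ
  have hτinv : 0 < τ⁻¹ := inv_pos.2 hτ0
  have hexponent : ((4 : ℕ) : ℝ) - 5 = -1 := by norm_num
  have htail : ∫ y in Ioi τ⁻¹, y ^ ((4 : ℕ) - 5 : ℝ) * exp (-(c * τ) * y ^ 2)
      ≤ log τ + (2 * c)⁻¹ :=
    calc ∫ y in Ioi τ⁻¹, y ^ ((4 : ℕ) - 5 : ℝ) * exp (-(c * τ) * y ^ 2)
        ≤ (∫ y in τ⁻¹..1, y⁻¹) + ∫ y in Ioi 1, y ^ (1 : ℝ) * exp (-c * y ^ 2) := by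
          refine setIntegral_Ioi_le_intervalIntegral_add_setIntegral_Ioi (inv_le_one_of_one_le₀ hτ)
            (integrableOn_Ioi_rpow_mul_exp_neg_mul_sq hτinv (mul_pos hc hτ0) _)
            (intervalIntegrable_inv_iff.2 (Or.inr ?_))
            (integrableOn_Ioi_rpow_mul_exp_neg_mul_sq one_pos hc _)
            (fun y hy => ?_) (fun y hy => ?_)
          · rw [uIcc_of_le (inv_le_one_of_one_le₀ hτ)]
            exact fun h => hτinv.not_ge h.1
          · rw [hexponent, rpow_neg_one]
            exact mul_le_of_le_one_right (inv_nonneg.2 (hτinv.trans_le hy.1).le)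
              (exp_le_one_iff.2 (by nlinarith [mul_pos hc hτ0, sq_nonneg y]))
          · have hy : 1 < y := hy
            rw [hexponent, rpow_neg_one, rpow_one]
            gcongr
            · exact (inv_lt_one_of_one_lt₀ hy).le.trans hy.le
            · nlinarith [sq_nonneg y]
      _ ≤ log τ + (2 * c)⁻¹ := by
          gcongr
          · rw [integral_inv_of_pos hτinv one_pos, one_div, inv_inv]
          · refine (setIntegral_Ioi_rpow_mul_exp_neg_mul_sq_le zero_le_one hc
              (by norm_num)).trans ?_
            norm_num [Gamma_one, rpow_neg_one]
  calc ∫ y in Ioi 0, y ^ (4 - 1) * radialProfile c τ y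
      ≤ τ ^ ((4 : ℝ) - (4 : ℕ)) / (4 : ℕ) + (log τ + (2 * c)⁻¹) :=
        (integral_pow_mul_radialProfile_le (by norm_num) hc hτ0).trans (add_le_add le_rfl htail)
    _ = 1 / 4 + (log τ + (2 * c)⁻¹) := by norm_num
    _ ≤ 1 + log τ + (2 * c)⁻¹ := by linarith

theorem integral_pow_mul_radialProfile_le_of_five_le (hn : 5 ≤ n) (hc : 0 < c) (hτ : 1 ≤ τ) :
    ∫ y in Ioi 0, y ^ (n - 1) * radialProfile c τ y
      ≤ (1 + c ^ (((4 : ℝ) - n) / 2) * Gamma (((n : ℝ) - 4) / 2) / 2)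
        * τ ^ (((4 : ℝ) - n) / 2) := by
  have hτ0 : 0 < τ := one_pos.trans_le hτ
  have hn' : (5 : ℝ) ≤ n := by exact_mod_cast hn
  have hnear : τ ^ ((4 : ℝ) - n) / n ≤ τ ^ (((4 : ℝ) - n) / 2) :=
    (div_le_self (by positivity) (by linarith)).trans
      (rpow_le_rpow_of_exponent_le hτ (by linarith))
  have htail : ∫ y in Ioi τ⁻¹, y ^ ((n : ℝ) - 5) * exp (-(c * τ) * y ^ 2)
      ≤ c ^ (((4 : ℝ) - n) / 2) * Gamma (((n : ℝ) - 4) / 2) / 2 * τ ^ (((4 : ℝ) - n) / 2) := by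
    refine (setIntegral_Ioi_rpow_mul_exp_neg_mul_sq_le (inv_pos.2 hτ0).le (mul_pos hc hτ0)
      (by linarith)).trans (le_of_eq ?_)
    rw [show -((n : ℝ) - 5 + 1) / 2 = ((4 : ℝ) - n) / 2 by ring,
      show ((n : ℝ) - 5 + 1) / 2 = ((n : ℝ) - 4) / 2 by ring, mul_rpow hc.le hτ0.le]
    ring
  calc ∫ y in Ioi 0, y ^ (n - 1) * radialProfile c τ y
      ≤ τ ^ ((4 : ℝ) - n) / n
          + c ^ (((4 : ℝ) - n) / 2) * Gamma (((n : ℝ) - 4) / 2) / 2 * τ ^ (((4 : ℝ) - n) / 2) :=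
        (integral_pow_mul_radialProfile_le (by omega) hc hτ0).trans (add_le_add le_rfl htail)
    _ ≤ _ := by linarith

theorem exists_integral_pow_mul_radialProfile_le_calDTilde_sq (hn : 1 ≤ n) (hc : 0 < c) :
    ∃ C > 0, ∀ t : ℝ, 0 ≤ t →
      ∫ y in Ioi 0, y ^ (n - 1) * radialProfile c (1 + t) y ≤ C * calDTilde n t ^ 2 := by
  by_cases h3 : n ≤ 3
  · refine ⟨2, two_pos, fun t ht => ?_⟩
    rw [calDTilde, if_pos h3, ← rpow_mul_natCast (by linarith : (0 : ℝ) ≤ 1 + t)]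
    convert integral_pow_mul_radialProfile_le_of_le_three hn h3 hc
      (by linarith : (0 : ℝ) < 1 + t) using 3
    push_cast
    ring
  obtain rfl | h5 : n = 4 ∨ 5 ≤ n := by omega
  · refine ⟨2 + (2 * c)⁻¹, by positivity, fun t ht => ?_⟩
    have hlog : 1 ≤ log (exp 1 + t) := by
      rw [le_log_iff_exp_le (by positivity)]
      linarith
    have hlog_le : log (1 + t) ≤ log (exp 1 + t) :=
      log_le_log (by linarith) (by linarith [add_one_le_exp 1])
    rw [calDTilde, if_neg h3, if_pos rfl, ← sqrt_eq_rpow, sq_sqrt (by linarith)]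
    refine (integral_pow_mul_radialProfile_four_le hc (by linarith)).trans ?_
    nlinarith [inv_pos.2 (mul_pos two_pos hc)]
  · have hn' : (5 : ℝ) ≤ n := by exact_mod_cast h5
    refine ⟨1 + c ^ (((4 : ℝ) - n) / 2) * Gamma (((n : ℝ) - 4) / 2) / 2, ?_, fun t ht => ?_⟩
    · have := Gamma_pos_of_pos (show 0 < ((n : ℝ) - 4) / 2 by linarith)
      positivity
    rw [calDTilde, if_neg h3, if_neg (by omega), ← rpow_mul_natCast (by linarith : (0 : ℝ) ≤ 1 + t)]
    convert integral_pow_mul_radialProfile_le_of_five_le h5 hc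
      (by linarith : (1 : ℝ) ≤ 1 + t) using 3
    push_cast
    ring

end RadialProfile

theorem eLpNorm_two_le_ofReal_sqrt_integral {α : Type*} [MeasurableSpace α] {μ : Measure α}
    {f g : α → ℝ} (hg : Integrable g μ) (hfg : ∀ᵐ x ∂μ, f x ^ 2 ≤ g x) :
    eLpNorm f 2 μ ≤ ENNReal.ofReal √(∫ x, g x ∂μ) := by
  have hg0 : 0 ≤ᵐ[μ] g := hfg.mono fun x hx => (sq_nonneg _).trans hx
  rw [eLpNorm_eq_lintegral_rpow_enorm_toReal two_ne_zero ENNReal.ofNat_ne_top, sqrt_eq_rpow,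
    ← ENNReal.ofReal_rpow_of_nonneg (integral_nonneg_of_ae hg0) (by norm_num),
    ofReal_integral_eq_lintegral_ofReal hg hg0, ENNReal.toReal_ofNat]
  gcongr ?_ ^ _
  refine lintegral_mono_ae (hfg.mono fun x hx => ?_)
  rw [enorm_eq_ofReal_abs, ENNReal.ofReal_rpow_of_nonneg (abs_nonneg _) two_pos.le, rpow_two,
    sq_abs]
  exact ENNReal.ofReal_le_ofReal hx

theorem inv_sq_mul_sin_sq_sq_le_min (r : ℝ) {t : ℝ} (ht : 0 ≤ t) :
    ((r ^ 2)⁻¹ * |sin (r * t / 2)| ^ 2) ^ 2 ≤ min ((r ^ 4)⁻¹) ((1 + t) ^ 4) := by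
  rcases eq_or_ne r 0 with rfl | hr
  · simp only [ne_eq, OfNat.ofNat_ne_zero, not_false_eq_true, zero_pow, inv_zero, zero_mul]
    positivity
  have hsin_le_one : |sin (r * t / 2)| ≤ 1 := abs_sin_le_one _
  have hsin_le : |sin (r * t / 2)| ≤ |r| * (t / 2) := by
    simpa [abs_mul, abs_of_nonneg (by positivity : (0 : ℝ) ≤ t / 2), mul_div_assoc]
      using abs_sin_le_abs (x := r * t / 2)
  rw [show ((r ^ 2)⁻¹ * |sin (r * t / 2)| ^ 2) ^ 2 = (r ^ 4)⁻¹ * |sin (r * t / 2)| ^ 4 by ring]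
  refine le_min (mul_le_of_le_one_right (by positivity) (pow_le_one₀ (abs_nonneg _) hsin_le_one))
    ?_
  calc (r ^ 4)⁻¹ * |sin (r * t / 2)| ^ 4 ≤ (r ^ 4)⁻¹ * (|r| * (t / 2)) ^ 4 := by gcongr
    _ = (t / 2) ^ 4 := by
        rw [mul_pow, pow_abs, abs_of_nonneg (by positivity), ← mul_assoc,
          inv_mul_cancel₀ (by positivity), one_mul]
    _ ≤ (1 + t) ^ 4 := by gcongr; linarith

theorem exp_sq_le_exp_mul_exp {c t r ε : ℝ} (hc : 0 ≤ c) (ht : 0 ≤ t) (hr : r ^ 2 ≤ ε ^ 2) :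
    exp (-c * r ^ 2 * t) ^ 2 ≤ exp (c * ε ^ 2) * exp (-(c * (1 + t)) * r ^ 2) := by
  have hcr : c * r ^ 2 ≤ c * ε ^ 2 := mul_le_mul_of_nonneg_left hr hc
  have hcrt : 0 ≤ c * r ^ 2 * t := by positivity
  rw [sq, ← exp_add, ← exp_add]
  exact exp_le_exp.2 (by linarith)

theorem integrand_sq_le_radialProfile {c t r ε : ℝ} (hc : 0 ≤ c) (ht : 0 ≤ t)
    (hr : r ^ 2 ≤ ε ^ 2) :
    ((r ^ 2)⁻¹ * |sin (r * t / 2)| ^ 2 * exp (-c * r ^ 2 * t)) ^ 2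
      ≤ exp (c * ε ^ 2) * radialProfile c (1 + t) r := by
  calc ((r ^ 2)⁻¹ * |sin (r * t / 2)| ^ 2 * exp (-c * r ^ 2 * t)) ^ 2
      = ((r ^ 2)⁻¹ * |sin (r * t / 2)| ^ 2) ^ 2 * exp (-c * r ^ 2 * t) ^ 2 := mul_pow _ _ _
    _ ≤ min ((r ^ 4)⁻¹) ((1 + t) ^ 4) * (exp (c * ε ^ 2) * exp (-(c * (1 + t)) * r ^ 2)) :=
        mul_le_mul (inv_sq_mul_sin_sq_sq_le_min r ht) (exp_sq_le_exp_mul_exp hc ht hr)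
          (sq_nonneg _) (le_min (by positivity) (by positivity))
    _ = exp (c * ε ^ 2) * radialProfile c (1 + t) r := by unfold radialProfile; ring

theorem calDTilde_nonneg (n : ℕ) {t : ℝ} (ht : 0 ≤ t) : 0 ≤ calDTilde n t := by
  have hlog : 0 ≤ log (exp 1 + t) := log_nonneg (by linarith [add_one_le_exp 1])
  unfold calDTilde
  split_ifs <;> positivity

section Radial

variable {E : Type*} [NormedAddCommGroup E] [NormedSpace ℝ E] [FiniteDimensional ℝ E]
  [Nontrivial E] [MeasurableSpace E] [BorelSpace E] (μ : Measure E) [μ.IsAddHaarMeasure]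

theorem exists_integral_radialProfile_norm_le_calDTilde_sq {c : ℝ} (hc : 0 < c) :
    ∃ C > 0, ∀ t : ℝ, 0 ≤ t → Integrable (fun x => radialProfile c (1 + t) ‖x‖) μ ∧
      ∫ x, radialProfile c (1 + t) ‖x‖ ∂μ ≤ C * calDTilde (Module.finrank ℝ E) t ^ 2 := by
  obtain ⟨C, hC, hradial⟩ :=
    exists_integral_pow_mul_radialProfile_le_calDTilde_sq (Module.finrank_pos (R := ℝ) (M := E)) hc
  have hball : 0 < μ.real (Metric.ball 0 1) :=
    ENNReal.toReal_pos (Metric.measure_ball_pos μ 0 one_pos).ne' measure_ball_lt_top.ne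
  have hdim : (0 : ℝ) < Module.finrank ℝ E := Nat.cast_pos.2 Module.finrank_pos
  refine ⟨Module.finrank ℝ E * μ.real (Metric.ball 0 1) * C, by positivity, fun t ht => ⟨?_, ?_⟩⟩
  · simpa only [integrable_fun_norm_addHaar μ, smul_eq_mul]
      using integrableOn_pow_mul_radialProfile _ hc (by linarith)
  · simp only [integral_fun_norm_addHaar μ, nsmul_eq_mul, smul_eq_mul, mul_assoc]
    exact mul_le_mul_of_nonneg_left (mul_le_mul_of_nonneg_left (hradial t ht) hball.le) hdim.le

end Radial

theorem stmt3_general (n : ℕ) (hn : 1 ≤ n) (c ε : ℝ) (hc : 0 < c) :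
    ∃ C : ℝ, 0 < C ∧ ∀ t : ℝ, 0 ≤ t →
      eLpNorm (fun ξ : EuclideanSpace ℝ (Fin n) =>
          (‖ξ‖ ^ 2)⁻¹ * |Real.sin (‖ξ‖ * t / 2)| ^ 2 * Real.exp (-c * ‖ξ‖ ^ 2 * t)) 2
          (volume.restrict {ξ : EuclideanSpace ℝ (Fin n) | ‖ξ‖ < ε})
        ≤ ENNReal.ofReal (C * calDTilde n t) := by
  have : Nontrivial (EuclideanSpace ℝ (Fin n)) :=
    Module.nontrivial_of_finrank_pos (R := ℝ) (by rw [finrank_euclideanSpace_fin]; omega)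
  obtain ⟨C, hC, hbound⟩ := exists_integral_radialProfile_norm_le_calDTilde_sq
    (volume : Measure (EuclideanSpace ℝ (Fin n))) hc
  rw [finrank_euclideanSpace_fin] at hbound
  refine ⟨√(exp (c * ε ^ 2) * C), by positivity, fun t ht => ?_⟩
  obtain ⟨hint, hle⟩ := hbound t ht
  have hint' := hint.const_mul (exp (c * ε ^ 2))
  refine (eLpNorm_two_le_ofReal_sqrt_integral hint'.restrict ?_).trans
    (ENNReal.ofReal_le_ofReal ?_)
  · refine (ae_restrict_iff' (measurableSet_lt measurable_norm measurable_const)).2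
      (.of_forall fun ξ (hξ : ‖ξ‖ < ε) => ?_)
    exact integrand_sq_le_radialProfile hc.le ht (pow_le_pow_left₀ (norm_nonneg _) hξ.le 2)
  calc √(∫ ξ in {ξ | ‖ξ‖ < ε}, exp (c * ε ^ 2) * radialProfile c (1 + t) ‖ξ‖)
      ≤ √(∫ ξ, exp (c * ε ^ 2) * radialProfile c (1 + t) ‖ξ‖) :=
        sqrt_le_sqrt (setIntegral_le_integral hint'
          (.of_forall fun ξ => mul_nonneg (exp_pos _).le (radialProfile_nonneg _)))
    _ ≤ √(exp (c * ε ^ 2) * C * calDTilde n t ^ 2) := by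
        rw [integral_const_mul, mul_assoc]
        gcongr
    _ = √(exp (c * ε ^ 2) * C) * calDTilde n t := by
        rw [sqrt_mul (by positivity), sqrt_sq (calDTilde_nonneg n ht)]

/-- For `n ≥ 1`, `c > 0`, `ε > 0`, there is `C > 0` such that for all `t ≥ 0`,
`‖ |ξ|⁻² |sin(|ξ|t/2)|² e^{-c|ξ|²t} ‖_{L²(|ξ|<ε)} ≤ C 𝒟̃_n(1+t)`. -/
theorem stmt3 (n : ℕ) (hn : 1 ≤ n) (c ε : ℝ) (hc : 0 < c) (hε : 0 < ε) :
    ∃ C : ℝ, 0 < C ∧ ∀ t : ℝ, 0 ≤ t →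
      eLpNorm (fun ξ : EuclideanSpace ℝ (Fin n) =>
          (‖ξ‖ ^ 2)⁻¹ * |Real.sin (‖ξ‖ * t / 2)| ^ 2 * Real.exp (-c * ‖ξ‖ ^ 2 * t)) 2
          (volume.restrict {ξ : EuclideanSpace ℝ (Fin n) | ‖ξ‖ < ε})
        ≤ ENNReal.ofReal (C * calDTilde n t) :=
  stmt3_general n hn c ε hc
end

section
/- Let κ > 0, δ > 0 and γ̃ ≥ 0 be real parameters and let r > 0. Then every complex root λ of the cubic polynomial Λ(λ) = λ³ + (δ+κ) r² λ² + (1 + γ̃ r²) r² λ + κ r⁴ has strictly negative real part; in particular, Λ has no root on the imaginary axis. -/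
/-- Let `κ > 0`, `δ > 0`, `γ̃ ≥ 0` and `r > 0`. Every complex root `z` of the
cubic `Λ(z) = z³ + (δ+κ) r² z² + (1 + γ̃ r²) r² z + κ r⁴` has strictly negative real part;
in particular `Λ` has no root on the imaginary axis. -/
theorem stmt4 (κ δ γt r : ℝ) (hκ : 0 < κ) (hδ : 0 < δ) (hγt : 0 ≤ γt) (hr : 0 < r)
    (z : ℂ)
    (hz : z ^ 3 + ((δ + κ) * r ^ 2 : ℝ) * z ^ 2 + ((1 + γt * r ^ 2) * r ^ 2 : ℝ) * z
        + ((κ * r ^ 4 : ℝ) : ℂ) = 0) :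
    z.re < 0 ∧ z.re ≠ 0 := by
  have key : z.re < 0 := by
    by_contra h
    push_neg at h
    rw [Complex.ext_iff] at hz
    simp only [Complex.add_re, Complex.add_im, Complex.mul_re, Complex.mul_im,
      Complex.ofReal_re, Complex.ofReal_im, Complex.zero_re, Complex.zero_im,
      pow_succ, pow_zero, one_mul, Complex.one_re, Complex.one_im] at hz
    obtain ⟨h1, h2⟩ := hz
    ring_nf at h1 h2
    have ha0 : (0:ℝ) < (δ + κ) * r ^ 2 := by positivity
    have hb0 : (0:ℝ) < (1 + γt * r ^ 2) * r ^ 2 := by positivity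
    have habc : κ * r ^ 4 < (δ + κ) * r ^ 2 * ((1 + γt * r ^ 2) * r ^ 2) := by
      nlinarith [mul_pos hδ (pow_pos hr 4),
        mul_nonneg (mul_nonneg (by linarith : (0:ℝ) ≤ δ + κ) hγt) (pow_pos hr 6).le]
    have him : z.im * (3 * z.re ^ 2 - z.im ^ 2 + 2 * ((δ + κ) * r ^ 2) * z.re
        + (1 + γt * r ^ 2) * r ^ 2) = 0 := by linear_combination h2
    rcases mul_eq_zero.mp him with hy0 | hfac
    · have h1' : z.re ^ 3 + (δ + κ) * r ^ 2 * z.re ^ 2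
          + (1 + γt * r ^ 2) * r ^ 2 * z.re + κ * r ^ 4 = 0 := by
        linear_combination h1 + (3 * z.re + (δ + κ) * r ^ 2) * z.im * hy0
      nlinarith [pow_nonneg h 3, mul_nonneg (mul_nonneg ha0.le h) h,
        mul_nonneg hb0.le h, mul_pos hκ (pow_pos hr 4)]
    · have hy2 : z.im ^ 2 = 3 * z.re ^ 2 + 2 * ((δ + κ) * r ^ 2) * z.re
          + (1 + γt * r ^ 2) * r ^ 2 := by linarith
      have heq : -8 * z.re ^ 3 - 8 * ((δ + κ) * r ^ 2) * z.re ^ 2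
          - 2 * ((1 + γt * r ^ 2) * r ^ 2 + ((δ + κ) * r ^ 2) ^ 2) * z.re
          + (κ * r ^ 4 - (δ + κ) * r ^ 2 * ((1 + γt * r ^ 2) * r ^ 2)) = 0 := by
        linear_combination h1 + (3 * z.re + (δ + κ) * r ^ 2) * hy2
      nlinarith [pow_nonneg h 3, mul_nonneg (mul_nonneg ha0.le h) h,
        mul_nonneg (add_pos hb0 (mul_pos ha0 ha0)).le h, sq_nonneg ((δ + κ) * r ^ 2)]
  exact ⟨key, ne_of_lt key⟩
end
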